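/- Let (B(L))_{L≥0} and (I(k))_{k≥1} be nonnegative sequences with B(0)=1 satisfying the renewal equation B(L) = ∑_{k=1}^{L} I(k) B(L-k) for all L ≥ 1. Suppose there exists m ∈ ℝ and constants 0 < μ₀ ≤ 1 with μ₀ e^{-mL} ≤ B(L) ≤ e^{-mL} for all L ≥ 1. Then ∑_{k=1}^{∞} e^{mk} I(k) = 1. -/

import Mathlib

open Finset Filter Topology

/-! Tilting by `e^{mL}` turns `B` into a renewal sequence `b` with `μ₀ ≤ b ≤ 1` and increments
`ι k = e^{mk} I k`. For `0 < x < 1` the renewal equation says `A = 1 + x F A` for the generating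
functions `A x = ∑ bₙ xⁿ` and `F x = ∑ ι (k + 1) xᵏ`, so `x F x = 1 - 1 / A x`. As
`A x ≥ μ₀ / (1 - x)` blows up when `x → 1⁻`, `F x → 1`; and for nonnegative coefficients the
limit of a power series at `1⁻` is its sum at `1`. -/

theorem summable_norm_mul_pow_of_norm_le {u : ℕ → ℝ} {C x : ℝ} (hu : ∀ n, ‖u n‖ ≤ C)
    (hx0 : 0 ≤ x) (hx1 : x < 1) : Summable fun n => ‖u n * x ^ n‖ :=
  (summable_geometric_of_lt_one hx0 hx1).mul_left C |>.of_nonneg_of_le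
    (fun _ => norm_nonneg _) fun n => by
      rw [norm_mul, norm_pow, Real.norm_of_nonneg hx0]
      exact mul_le_mul_of_nonneg_right (hu n) (pow_nonneg hx0 n)

theorem hasSum_of_tendsto_tsum_powerSeries_nhdsWithin_lt {c : ℕ → ℝ} {l : ℝ}
    (hc : ∀ n, 0 ≤ c n) (hsum : ∀ x ∈ Set.Ioo (0 : ℝ) 1, Summable fun n => c n * x ^ n)
    (hlim : Tendsto (fun x => ∑' n, c n * x ^ n) (𝓝[<] 1) (𝓝 l)) : HasSum c l := by
  have hIoo : ∀ᶠ x in 𝓝[<] (1 : ℝ), x ∈ Set.Ioo 0 1 := Ioo_mem_nhdsLT one_pos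
  have hpartial : ∀ N, ∑ n ∈ range N, c n ≤ l := by
    intro N
    have hpoly : Tendsto (fun x : ℝ => ∑ n ∈ range N, c n * x ^ n) (𝓝[<] 1)
        (𝓝 (∑ n ∈ range N, c n)) := by
      simpa using ((continuous_finsetSum (range N) fun n _ =>
        continuous_const.mul (continuous_pow n)).tendsto (1 : ℝ)).mono_left nhdsWithin_le_nhds
    refine le_of_tendsto_of_tendsto hpoly hlim ?_
    filter_upwards [hIoo] with x hx
    exact (hsum x hx).sum_le_tsum _ fun n _ => mul_nonneg (hc n) (pow_nonneg hx.1.le n)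
  have hc_summable : Summable c := summable_of_sum_range_le hc hpartial
  refine hc_summable.hasSum_iff.2 (le_antisymm (hc_summable.tsum_le_of_sum_range_le hpartial) ?_)
  refine le_of_tendsto hlim ?_
  filter_upwards [hIoo] with x hx
  exact (hsum x hx).tsum_le_tsum
    (fun n => mul_le_of_le_one_right (hc n) (pow_le_one₀ hx.1.le hx.2.le)) hc_summable

theorem tendsto_inv_tsum_mul_pow_nhdsWithin_lt {a : ℕ → ℝ} {μ : ℝ} (hμ : 0 < μ)
    (haμ : ∀ n, μ ≤ a n) (hsum : ∀ x ∈ Set.Ioo (0 : ℝ) 1, Summable fun n => a n * x ^ n) :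
    Tendsto (fun x => (∑' n, a n * x ^ n)⁻¹) (𝓝[<] 1) (𝓝 0) := by
  have hbound : Tendsto (fun x : ℝ => (1 - x) / μ) (𝓝[<] 1) (𝓝 0) := by
    have h : Tendsto (fun x : ℝ => (1 - x) / μ) (𝓝 1) (𝓝 ((1 - 1) / μ)) :=
      (tendsto_const_nhds.sub tendsto_id).div_const μ
    simpa using h.mono_left nhdsWithin_le_nhds
  have hgeom : ∀ x ∈ Set.Ioo (0 : ℝ) 1, μ / (1 - x) ≤ ∑' n, a n * x ^ n := fun x hx =>
    calc μ / (1 - x) = ∑' n, μ * x ^ n := by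
          rw [tsum_mul_left, tsum_geometric_of_lt_one hx.1.le hx.2, div_eq_mul_inv]
      _ ≤ ∑' n, a n * x ^ n :=
          ((summable_geometric_of_lt_one hx.1.le hx.2).mul_left μ).tsum_le_tsum
            (fun n => mul_le_mul_of_nonneg_right (haμ n) (pow_nonneg hx.1.le n)) (hsum x hx)
  have hgeom_pos : ∀ x ∈ Set.Ioo (0 : ℝ) 1, 0 < μ / (1 - x) := fun x hx =>
    div_pos hμ (sub_pos.2 hx.2)
  refine tendsto_of_tendsto_of_tendsto_of_le_of_le' tendsto_const_nhds hbound ?_ ?_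
  · filter_upwards [Ioo_mem_nhdsLT one_pos] with x hx
    exact inv_nonneg.2 ((hgeom_pos x hx).le.trans (hgeom x hx))
  · filter_upwards [Ioo_mem_nhdsLT one_pos] with x hx
    simpa using inv_anti₀ (hgeom_pos x hx) (hgeom x hx)

section Renewal

variable {a f : ℕ → ℝ}

theorem renewal_succ (hren : ∀ L, 1 ≤ L → a L = ∑ k ∈ Icc 1 L, f k * a (L - k)) (n : ℕ) :
    a (n + 1) = ∑ k ∈ range (n + 1), f (k + 1) * a (n - k) := by
  rw [hren (n + 1) n.succ_pos, ← Finset.Ico_add_one_right_eq_Icc, sum_Ico_eq_sum_range,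
    Nat.add_sub_cancel]
  refine sum_congr rfl fun k hk => ?_
  rw [add_comm 1 k, Nat.add_sub_add_right]

theorem le_of_renewal (ha0 : a 0 = 1) (ha : ∀ n, 0 ≤ a n) (hf : ∀ k, 0 ≤ f k)
    (hren : ∀ L, 1 ≤ L → a L = ∑ k ∈ Icc 1 L, f k * a (L - k)) {L : ℕ} (hL : 1 ≤ L) :
    f L ≤ a L := by
  have := single_le_sum (f := fun k => f k * a (L - k))
    (fun k _ => mul_nonneg (hf k) (ha _)) (mem_Icc.2 ⟨hL, le_rfl⟩)
  simpa [ha0, ← hren L hL] using this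

theorem norm_le_of_renewal (ha0 : a 0 = 1) (ha : ∀ n, 0 ≤ a n) (hf : ∀ k, 0 ≤ f k)
    (hren : ∀ L, 1 ≤ L → a L = ∑ k ∈ Icc 1 L, f k * a (L - k)) {C : ℝ} (haC : ∀ n, a n ≤ C)
    (k : ℕ) : ‖f (k + 1)‖ ≤ C := by
  rw [Real.norm_of_nonneg (hf _)]
  exact (le_of_renewal ha0 ha hf hren k.succ_pos).trans (haC _)

theorem renewal_tsum_mul_pow (ha0 : a 0 = 1)
    (hren : ∀ L, 1 ≤ L → a L = ∑ k ∈ Icc 1 L, f k * a (L - k)) {x : ℝ}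
    (ha : Summable fun n => ‖a n * x ^ n‖) (hf : Summable fun k => ‖f (k + 1) * x ^ k‖) :
    x * (∑' k, f (k + 1) * x ^ k) * ∑' n, a n * x ^ n = ∑' n, a n * x ^ n - 1 := by
  rw [mul_assoc, tsum_mul_tsum_eq_tsum_sum_range_of_summable_norm hf ha, ← tsum_mul_left,
    ha.of_norm.tsum_eq_zero_add, ha0, pow_zero, mul_one, add_sub_cancel_left]
  refine tsum_congr fun n => ?_
  rw [renewal_succ hren n, mul_sum, sum_mul]
  refine sum_congr rfl fun k hk => ?_
  have hkn : k + (n - k) = n := Nat.add_sub_cancel' (Nat.lt_succ_iff.1 (mem_range.1 hk))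
  have hpow : x ^ (n + 1) = x * x ^ k * x ^ (n - k) := by
    rw [mul_assoc, ← pow_add, hkn, pow_succ']
  rw [hpow]
  ring

theorem tendsto_renewal_tsum_mul_pow (ha0 : a 0 = 1) (hf : ∀ k, 0 ≤ f k)
    (hren : ∀ L, 1 ≤ L → a L = ∑ k ∈ Icc 1 L, f k * a (L - k)) {μ C : ℝ} (hμ : 0 < μ)
    (haμ : ∀ n, μ ≤ a n) (haC : ∀ n, a n ≤ C) :
    Tendsto (fun x => ∑' k, f (k + 1) * x ^ k) (𝓝[<] 1) (𝓝 1) := by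
  have ha_nonneg : ∀ n, 0 ≤ a n := fun n => hμ.le.trans (haμ n)
  have ha_norm : ∀ n, ‖a n‖ ≤ C := fun n => by
    rw [Real.norm_of_nonneg (ha_nonneg n)]; exact haC n
  have hf_norm := norm_le_of_renewal ha0 ha_nonneg hf hren haC
  have hinv := tendsto_inv_tsum_mul_pow_nhdsWithin_lt hμ haμ fun x hx =>
    (summable_norm_mul_pow_of_norm_le ha_norm hx.1.le hx.2).of_norm
  have hlim : Tendsto (fun x : ℝ => (1 - (∑' n, a n * x ^ n)⁻¹) / x) (𝓝[<] 1) (𝓝 1) := by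
    have hid : Tendsto (fun x : ℝ => x) (𝓝[<] 1) (𝓝 1) :=
      tendsto_nhdsWithin_of_tendsto_nhds tendsto_id
    have h := (tendsto_const_nhds (x := (1 : ℝ))).sub hinv |>.div hid one_ne_zero
    rw [sub_zero, div_one] at h
    exact h
  refine hlim.congr' ?_
  filter_upwards [Ioo_mem_nhdsLT one_pos] with x hx
  have ha_sum := summable_norm_mul_pow_of_norm_le ha_norm hx.1.le hx.2
  have hA := renewal_tsum_mul_pow ha0 hren ha_sum
    (summable_norm_mul_pow_of_norm_le hf_norm hx.1.le hx.2)
  have hA_pos : 0 < ∑' n, a n * x ^ n :=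
    ha_sum.of_norm.tsum_pos (fun n => mul_nonneg (ha_nonneg n) (pow_nonneg hx.1.le n)) 0
      (by simp [ha0])
  have hx0 : x ≠ 0 := hx.1.ne'
  field_simp
  linear_combination -hA

theorem hasSum_renewal (ha0 : a 0 = 1) (hf : ∀ k, 0 ≤ f k)
    (hren : ∀ L, 1 ≤ L → a L = ∑ k ∈ Icc 1 L, f k * a (L - k)) {μ C : ℝ} (hμ : 0 < μ)
    (haμ : ∀ n, μ ≤ a n) (haC : ∀ n, a n ≤ C) : HasSum (fun k => f (k + 1)) 1 :=
  hasSum_of_tendsto_tsum_powerSeries_nhdsWithin_lt (fun k => hf (k + 1))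
    (fun _ hx => (summable_norm_mul_pow_of_norm_le
      (norm_le_of_renewal ha0 (fun n => hμ.le.trans (haμ n)) hf hren haC) hx.1.le hx.2).of_norm)
    (tendsto_renewal_tsum_mul_pow ha0 hf hren hμ haμ haC)

theorem renewal_exp_mul (m : ℝ) (hren : ∀ L, 1 ≤ L → a L = ∑ k ∈ Icc 1 L, f k * a (L - k))
    (L : ℕ) (hL : 1 ≤ L) :
    Real.exp (m * L) * a L =
      ∑ k ∈ Icc 1 L, Real.exp (m * k) * f k * (Real.exp (m * ↑(L - k)) * a (L - k)) := by
  rw [hren L hL, mul_sum]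
  refine sum_congr rfl fun k hk => ?_
  rw [Nat.cast_sub (mem_Icc.1 hk).2, mul_sub, Real.exp_sub]
  field_simp

end Renewal

theorem renewal_tilted_prob_general (B I : ℕ → ℝ) (m μ₀ : ℝ)
    (hB0 : B 0 = 1)
    (hInonneg : ∀ k, 0 ≤ I k)
    (hren : ∀ L : ℕ, 1 ≤ L → B L = ∑ k ∈ Finset.Icc 1 L, I k * B (L - k))
    (hμ₀pos : 0 < μ₀) (hμ₀le : μ₀ ≤ 1)
    (hlower : ∀ L : ℕ, 1 ≤ L → μ₀ * Real.exp (-m * L) ≤ B L)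
    (hupper : ∀ L : ℕ, 1 ≤ L → B L ≤ Real.exp (-m * L)) :
    ∑' k : ℕ, Real.exp (m * (k + 1)) * I (k + 1) = 1 := by
  set b : ℕ → ℝ := fun L => Real.exp (m * L) * B L
  set ι : ℕ → ℝ := fun k => Real.exp (m * k) * I k
  have hexp : ∀ L : ℕ, Real.exp (m * L) * Real.exp (-m * L) = 1 := fun L => by
    rw [← Real.exp_add, neg_mul, add_neg_cancel, Real.exp_zero]
  have hb0 : b 0 = 1 := by simp [b, hB0]
  have hι : ∀ k, 0 ≤ ι k := fun k => mul_nonneg (Real.exp_pos _).le (hInonneg k)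
  have hb_le : ∀ L, b L ≤ 1 := by
    rintro (_ | L)
    · exact hb0.le
    · exact (mul_le_mul_of_nonneg_left (hupper _ L.succ_pos) (Real.exp_pos _).le).trans_eq
        (hexp _)
  have hb_ge : ∀ L, μ₀ ≤ b L := by
    rintro (_ | L)
    · exact hb0 ▸ hμ₀le
    · calc μ₀ = Real.exp (m * ↑(L + 1)) * (μ₀ * Real.exp (-m * ↑(L + 1))) := by
            rw [mul_left_comm, hexp, mul_one]
        _ ≤ b (L + 1) :=
            mul_le_mul_of_nonneg_left (hlower _ L.succ_pos) (Real.exp_pos _).le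
  simpa [ι] using
    (hasSum_renewal hb0 hι (renewal_exp_mul m hren) hμ₀pos hb_ge hb_le).tsum_eq

/-- Renewal equation with two-sided exponential bounds: if `B(L) = ∑_{k=1}^L I(k) B(L-k)`
and `μ₀ e^{-mL} ≤ B(L) ≤ e^{-mL}`, then `(e^{mk} I(k))_{k ≥ 1}` sums to `1`. -/
theorem renewal_tilted_prob (B I : ℕ → ℝ) (m μ₀ : ℝ)
    (hB0 : B 0 = 1)
    (hBnonneg : ∀ L, 0 ≤ B L) (hInonneg : ∀ k, 0 ≤ I k)
    (hren : ∀ L : ℕ, 1 ≤ L → B L = ∑ k ∈ Finset.Icc 1 L, I k * B (L - k))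
    (hμ₀pos : 0 < μ₀) (hμ₀le : μ₀ ≤ 1)
    (hlower : ∀ L : ℕ, 1 ≤ L → μ₀ * Real.exp (-m * L) ≤ B L)
    (hupper : ∀ L : ℕ, 1 ≤ L → B L ≤ Real.exp (-m * L)) :
    ∑' k : ℕ, Real.exp (m * (k + 1)) * I (k + 1) = 1 :=
  renewal_tilted_prob_general B I m μ₀ hB0 hInonneg hren hμ₀pos hμ₀le hlower hupper
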